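/- Let (X, ρ) and (Y, σ) be metric spaces, let f : X → Y be 1-Lipschitz, and let μ be a uniformly positive Borel probability measure on Y. Fix γ > 0 and δ ∈ (0,1), set m = inf_{y ∈ Y} μ(B(y, γ/2)) (so m > 0; assume δ·m < 1), and let ε = (4/γ)·ln(1/(δ·m)). Then there exists a mechanism M : X → (Borel probability measures on Y) — namely the conventional exponential mechanism C^{μ;β} with β = ε/2 — that simultaneously achieves ε-differential privacy and (γ,δ)-utility: M_x(T) ≤ e^{ε·ρ(x,z)}·M_z(T) for all x, z ∈ X and Borel T ⊆ Y, and M_x(B(f(x),γ)) ≥ 1 − δ for all x ∈ X. -/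

import Mathlib

/-!
Shifting the centre of the Gibbs density `exp (-β σ(c, ·))` by `d` changes it pointwise by at
most a factor `exp (β d)`, both in the numerator and in the normalising constant; hence privacy
with `ε = 2β`. For utility, the normalising constant is at least
`exp (-βγ/2) μ(B(c, γ/2)) ≥ exp (-βγ/2) m`, while the complement of `B(c, γ)` carries at most
`exp (-βγ)`; the choice of `ε` makes `exp (-βγ/2) = δ m`.
-/

open MeasureTheory ENNReal Metric

noncomputable section

variable {Y : Type*} [PseudoMetricSpace Y]

def expMechanismDensity (β : ℝ) (c y : Y) : ℝ≥0∞ :=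
  ENNReal.ofReal (Real.exp (-β * dist c y))

/-- The paper's `C^{μ;β}_x` is `expMechanism μ β (f x)`. -/
def expMechanism [MeasurableSpace Y] (μ : Measure Y) (β : ℝ) (c : Y) : Measure Y :=
  (∫⁻ y, expMechanismDensity β c y ∂μ)⁻¹ • μ.withDensity (expMechanismDensity β c)

theorem expMechanismDensity_le_one {β : ℝ} (hβ : 0 ≤ β) (c y : Y) :
    expMechanismDensity β c y ≤ 1 :=
  ofReal_le_one.mpr <| Real.exp_le_one_iff.mpr <|
    mul_nonpos_of_nonpos_of_nonneg (neg_nonpos.mpr hβ) dist_nonneg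

theorem expMechanismDensity_le_of_le_dist {β r : ℝ} (hβ : 0 ≤ β) {c y : Y}
    (hy : r ≤ dist c y) : expMechanismDensity β c y ≤ ENNReal.ofReal (Real.exp (-(β * r))) := by
  unfold expMechanismDensity
  gcongr
  nlinarith

theorem le_expMechanismDensity_of_dist_le {β r : ℝ} (hβ : 0 ≤ β) {c y : Y}
    (hy : dist c y ≤ r) : ENNReal.ofReal (Real.exp (-(β * r))) ≤ expMechanismDensity β c y := by
  unfold expMechanismDensity
  gcongr
  nlinarith

theorem expMechanismDensity_le_mul {β : ℝ} (hβ : 0 ≤ β) (c c' y : Y) :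
    expMechanismDensity β c y ≤
      ENNReal.ofReal (Real.exp (β * dist c c')) * expMechanismDensity β c' y := by
  unfold expMechanismDensity
  rw [← ofReal_mul (Real.exp_pos _).le, ← Real.exp_add]
  gcongr
  nlinarith [dist_triangle_left c' y c, dist_comm c c']

variable [MeasurableSpace Y] {μ : Measure Y} {β : ℝ}

theorem lintegral_expMechanismDensity_ne_top [IsFiniteMeasure μ] (hβ : 0 ≤ β) (c : Y) :
    ∫⁻ y, expMechanismDensity β c y ∂μ ≠ ∞ :=
  ne_top_of_le_ne_top (measure_ne_top μ Set.univ) <| by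
    simpa using lintegral_mono (expMechanismDensity_le_one hβ c)

theorem expMechanism_apply (μ : Measure Y) (β : ℝ) (c : Y) {T : Set Y} (hT : MeasurableSet T) :
    expMechanism μ β c T =
      (∫⁻ y in T, expMechanismDensity β c y ∂μ) / ∫⁻ y, expMechanismDensity β c y ∂μ := by
  rw [expMechanism, Measure.smul_apply, withDensity_apply _ hT, smul_eq_mul,
    ENNReal.div_eq_inv_mul]

variable [OpensMeasurableSpace Y]

theorem measurable_expMechanismDensity (β : ℝ) (c : Y) :
    Measurable (expMechanismDensity β c) :=
  (by fun_prop : Continuous fun y => Real.exp (-β * dist c y)).measurable.ennreal_ofReal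

theorem lintegral_expMechanismDensity_ne_zero [NeZero μ] (β : ℝ) (c : Y) :
    ∫⁻ y, expMechanismDensity β c y ∂μ ≠ 0 := by
  rw [Ne, lintegral_eq_zero_iff (measurable_expMechanismDensity β c)]
  intro h
  obtain ⟨y, hy⟩ := h.exists
  exact (ofReal_pos.mpr (Real.exp_pos _)).ne' hy

theorem isProbabilityMeasure_expMechanism [IsFiniteMeasure μ] [NeZero μ] (hβ : 0 ≤ β) (c : Y) :
    IsProbabilityMeasure (expMechanism μ β c) := by
  constructor
  rw [expMechanism_apply μ β c .univ, setLIntegral_univ]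
  exact ENNReal.div_self (lintegral_expMechanismDensity_ne_zero β c)
    (lintegral_expMechanismDensity_ne_top hβ c)

theorem expMechanism_le_exp_mul [IsFiniteMeasure μ] [NeZero μ] (hβ : 0 ≤ β) (c c' : Y)
    {T : Set Y} (hT : MeasurableSet T) :
    expMechanism μ β c T ≤
      ENNReal.ofReal (Real.exp (2 * β * dist c c')) * expMechanism μ β c' T := by
  set k := ENNReal.ofReal (Real.exp (β * dist c c'))
  have hnum : ∫⁻ y in T, expMechanismDensity β c y ∂μ ≤
      k * ∫⁻ y in T, expMechanismDensity β c' y ∂μ :=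
    (lintegral_mono fun y => expMechanismDensity_le_mul hβ c c' y).trans_eq
      (lintegral_const_mul k (measurable_expMechanismDensity β c'))
  have hden : ∫⁻ y, expMechanismDensity β c' y ∂μ ≤ k * ∫⁻ y, expMechanismDensity β c y ∂μ :=
    (lintegral_mono fun y => by simpa only [dist_comm c' c] using
      expMechanismDensity_le_mul hβ c' c y).trans_eq
      (lintegral_const_mul k (measurable_expMechanismDensity β c))
  have hkk : k * k = ENNReal.ofReal (Real.exp (2 * β * dist c c')) := by
    rw [← ofReal_mul (Real.exp_pos _).le, ← Real.exp_add]
    ring_nf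
  rw [expMechanism_apply μ β c hT, expMechanism_apply μ β c' hT, ← hkk,
    ENNReal.div_le_iff (lintegral_expMechanismDensity_ne_zero β c)
      (lintegral_expMechanismDensity_ne_top hβ c)]
  set N' := ∫⁻ y in T, expMechanismDensity β c' y ∂μ
  set Z' := ∫⁻ y, expMechanismDensity β c' y ∂μ
  calc _ ≤ k * N' := hnum
    _ = k * (N' / Z' * Z') := by
        rw [ENNReal.div_mul_cancel (lintegral_expMechanismDensity_ne_zero β c')
          (lintegral_expMechanismDensity_ne_top hβ c')]
    _ ≤ k * (N' / Z' * (k * ∫⁻ y, expMechanismDensity β c y ∂μ)) := by gcongr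
    _ = _ := by ring

theorem expMechanism_compl_ball_le [IsProbabilityMeasure μ] (hβ : 0 ≤ β) (c : Y) (r : ℝ) :
    expMechanism μ β c (ball c r)ᶜ ≤
      ENNReal.ofReal (Real.exp (-(β * (r / 2)))) / μ (ball c (r / 2)) := by
  set a := ENNReal.ofReal (Real.exp (-(β * (r / 2))))
  have hnum : ∫⁻ y in (ball c r)ᶜ, expMechanismDensity β c y ∂μ ≤ a * a := calc
    _ ≤ ∫⁻ _ in (ball c r)ᶜ, ENNReal.ofReal (Real.exp (-(β * r))) ∂μ :=
        setLIntegral_mono measurable_const fun y hy =>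
          expMechanismDensity_le_of_le_dist hβ (not_lt.mp (mt mem_ball'.mpr hy))
    _ = ENNReal.ofReal (Real.exp (-(β * r))) * μ (ball c r)ᶜ := setLIntegral_const _ _
    _ ≤ ENNReal.ofReal (Real.exp (-(β * r))) := mul_le_of_le_one_right' prob_le_one
    _ = a * a := by
        rw [← ofReal_mul (Real.exp_pos _).le, ← Real.exp_add]
        ring_nf
  have hden : a * μ (ball c (r / 2)) ≤ ∫⁻ y, expMechanismDensity β c y ∂μ := calc
    _ = ∫⁻ _ in ball c (r / 2), a ∂μ := (setLIntegral_const _ _).symm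
    _ ≤ ∫⁻ y in ball c (r / 2), expMechanismDensity β c y ∂μ :=
        setLIntegral_mono (measurable_expMechanismDensity β c) fun y hy =>
          le_expMechanismDensity_of_dist_le hβ (mem_ball'.mp hy).le
    _ ≤ _ := setLIntegral_le_lintegral _ _
  rw [expMechanism_apply μ β c measurableSet_ball.compl]
  calc _ ≤ a * a / (a * μ (ball c (r / 2))) := ENNReal.div_le_div hnum hden
    _ = a / μ (ball c (r / 2)) :=
        ENNReal.mul_div_mul_left _ _ (ofReal_pos.mpr (Real.exp_pos _)).ne' ofReal_ne_top

end

theorem ofReal_one_sub_le_of_measure_compl_le {α : Type*} [MeasurableSpace α] {ν : Measure α}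
    [IsProbabilityMeasure ν] {s : Set α} (hs : MeasurableSet s) {δ : ℝ} (hδ : 0 ≤ δ)
    (h : ν sᶜ ≤ ENNReal.ofReal δ) : ENNReal.ofReal (1 - δ) ≤ ν s := by
  rw [prob_compl_eq_one_sub hs] at h
  rw [ofReal_sub _ hδ, ofReal_one]
  exact tsub_le_iff_tsub_le.mp h

theorem exp_mech_privacy_and_utility_general {X Y : Type*} [MetricSpace X] [MetricSpace Y]
    [MeasurableSpace Y] [BorelSpace Y]
    (f : X → Y) (hf : ∀ x z : X, dist (f x) (f z) ≤ dist x z)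
    (μ : Measure Y) [IsProbabilityMeasure μ]
    (γ δ : ℝ) (hγ : 0 < γ) (hδ : δ ∈ Set.Ioo (0:ℝ) 1)
    (m : ℝ) (hm : m = (⨅ y : Y, μ (Metric.ball y (γ / 2))).toReal)
    (hm0 : 0 < m) (hδm : δ * m < 1)
    (ε : ℝ) (hε : ε = (4 / γ) * Real.log (1 / (δ * m))) :
    ∃ M : X → Measure Y,
      (∀ x, IsProbabilityMeasure (M x)) ∧
      (∀ x : X, ∀ T : Set Y, MeasurableSet T →
        M x T = (∫⁻ y in T, ENNReal.ofReal (Real.exp (-(ε / 2) * dist (f x) y)) ∂μ) /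
          (∫⁻ y, ENNReal.ofReal (Real.exp (-(ε / 2) * dist (f x) y)) ∂μ)) ∧
      (∀ x z : X, ∀ T : Set Y, MeasurableSet T →
        M x T ≤ ENNReal.ofReal (Real.exp (ε * dist x z)) * M z T) ∧
      (∀ x : X, ENNReal.ofReal (1 - δ) ≤ M x (Metric.ball (f x) γ)) := by
  have hδm0 : 0 < δ * m := mul_pos hδ.1 hm0
  have hlog : 0 < Real.log (1 / (δ * m)) := Real.log_pos (one_lt_one_div hδm0 hδm)
  have hβ : 0 ≤ ε / 2 := (half_pos (hε ▸ mul_pos (div_pos four_pos hγ) hlog)).le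
  have hexp : Real.exp (-(ε / 2 * (γ / 2))) = δ * m := by
    have hβγ : ε / 2 * (γ / 2) = Real.log (1 / (δ * m)) := by
      rw [hε]
      field_simp
      ring
    rw [hβγ, Real.exp_neg, Real.exp_log (by positivity), one_div, inv_inv]
  have hprob x : IsProbabilityMeasure (expMechanism μ (ε / 2) (f x)) :=
    isProbabilityMeasure_expMechanism hβ (f x)
  refine ⟨fun x => expMechanism μ (ε / 2) (f x), hprob, fun x T hT => expMechanism_apply μ _ _ hT,
    fun x z T hT => ?_, fun x => ?_⟩
  · refine (expMechanism_le_exp_mul hβ (f x) (f z) hT).trans ?_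
    gcongr ENNReal.ofReal (Real.exp ?_) * _
    nlinarith [hf x z]
  · refine ofReal_one_sub_le_of_measure_compl_le measurableSet_ball hδ.1.le ?_
    calc _ ≤ ENNReal.ofReal (δ * m) / μ (ball (f x) (γ / 2)) :=
          hexp ▸ expMechanism_compl_ball_le hβ (f x) γ
      _ ≤ ENNReal.ofReal (δ * m) / ENNReal.ofReal m := by
          gcongr
          exact hm ▸ ofReal_toReal_le.trans (iInf_le _ (f x))
      _ = ENNReal.ofReal δ := by
          rw [← ofReal_div_of_pos hm0, mul_div_cancel_right₀ _ hm0.ne']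

/-- for a 1-Lipschitz `f`, a uniformly positive Borel probability measure
`μ` on `Y`, `γ > 0`, `δ ∈ (0,1)`, `m = inf_y μ(B(y,γ/2))` (with `m > 0`, `δ·m < 1`) and
`ε = (4/γ)·ln(1/(δ·m))`, the conventional exponential mechanism with `β = ε/2`
simultaneously achieves `ε`-differential privacy and `(γ,δ)`-utility. -/
theorem exp_mech_privacy_and_utility {X Y : Type*} [MetricSpace X] [MetricSpace Y]
    [MeasurableSpace Y] [BorelSpace Y]
    (f : X → Y) (hf : ∀ x z : X, dist (f x) (f z) ≤ dist x z)
    (μ : Measure Y) [IsProbabilityMeasure μ]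
    (hμ : ∀ r > (0:ℝ), 0 < ⨅ y : Y, μ (Metric.ball y r))
    (γ δ : ℝ) (hγ : 0 < γ) (hδ : δ ∈ Set.Ioo (0:ℝ) 1)
    (m : ℝ) (hm : m = (⨅ y : Y, μ (Metric.ball y (γ / 2))).toReal)
    (hm0 : 0 < m) (hδm : δ * m < 1)
    (ε : ℝ) (hε : ε = (4 / γ) * Real.log (1 / (δ * m))) :
    ∃ M : X → Measure Y,
      (∀ x, IsProbabilityMeasure (M x)) ∧
      (∀ x : X, ∀ T : Set Y, MeasurableSet T →
        M x T = (∫⁻ y in T, ENNReal.ofReal (Real.exp (-(ε / 2) * dist (f x) y)) ∂μ) /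
          (∫⁻ y, ENNReal.ofReal (Real.exp (-(ε / 2) * dist (f x) y)) ∂μ)) ∧
      (∀ x z : X, ∀ T : Set Y, MeasurableSet T →
        M x T ≤ ENNReal.ofReal (Real.exp (ε * dist x z)) * M z T) ∧
      (∀ x : X, ENNReal.ofReal (1 - δ) ≤ M x (Metric.ball (f x) γ)) :=
  exp_mech_privacy_and_utility_general f hf μ γ δ hγ hδ m hm hm0 hδm ε hε
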